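/- arXiv:1812.03820 — 4 statements merged into one kernel-verified Lean document; each statement's English description precedes it below -/
import Mathlib

section
/- For every positive integer n with n ≡ 1 or 2 (mod 4), t(1,1,6;n) = 4·N(1,1,3;n+1). -/
def tri (x : ℤ) : ℤ := x * (x + 1) / 2

noncomputable def N (a b c n : ℕ) : ℕ :=
  Nat.card {p : ℤ × ℤ × ℤ // (n : ℤ) = a * p.1 ^ 2 + b * p.2.1 ^ 2 + c * p.2.2 ^ 2}

noncomputable def t (a b c n : ℕ) : ℕ :=
  Nat.card {p : ℤ × ℤ × ℤ // (n : ℤ) = a * tri p.1 + b * tri p.2.1 + c * tri p.2.2}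

noncomputable def T (a b c n : ℕ) : ℕ :=
  Nat.card {p : ℕ × ℕ × ℕ // (n : ℤ) = a * tri p.1 + b * tri p.2.1 + c * tri p.2.2}

lemma tri_key (x : ℤ) : 2 * tri x = x * (x + 1) :=
  Int.mul_ediv_cancel' (Int.even_mul_succ_self x).two_dvd

lemma sq4 (w : ℤ) : (w ^ 2 % 4 = 0 ∧ w % 2 = 0) ∨ (w ^ 2 % 4 = 1 ∧ w % 2 = 1) := by
  rcases Int.even_or_odd w with ⟨k, hk⟩ | ⟨k, hk⟩
  · exact .inl ⟨by rw [show w^2 = 4*k^2 by rw [hk]; ring, Int.mul_emod_right], by omega⟩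
  · exact .inr ⟨by rw [show w^2 = 1+4*(k^2+k) by rw [hk]; ring,
      Int.add_mul_emod_self_left]; rfl, by omega⟩

lemma parity_uv {m u v Z : ℤ} (h : 4 * m = u ^ 2 + v ^ 2 + 3 * Z ^ 2) (hz : Z % 2 = 1) :
    (u + v) % 2 = 1 := by
  have h1 := sq4 u; have h2 := sq4 v; have h3 := sq4 Z
  generalize u ^ 2 = U at h h1
  generalize v ^ 2 = V at h h2
  generalize Z ^ 2 = W at h h3
  omega

lemma parity_bc {m a b c : ℤ} (hm : m % 4 = 2 ∨ m % 4 = 3)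
    (h : m = a ^ 2 + b ^ 2 + 3 * c ^ 2) : (b + c) % 2 = 1 := by
  have h1 := sq4 a; have h2 := sq4 b; have h3 := sq4 c
  generalize a ^ 2 = U at h h1
  generalize b ^ 2 = V at h h2
  generalize c ^ 2 = W at h h3
  omega

set_option maxHeartbeats 1000000 in
lemma card1 (n : ℕ) : Nat.card {p : ℤ×ℤ×ℤ // (n:ℤ) = tri p.1 + tri p.2.1 + 6 * tri p.2.2} =
    Nat.card {p : ℤ×ℤ×ℤ // 8*((n:ℤ)+1) = p.1^2+p.2.1^2+6*p.2.2^2 ∧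
      p.1 % 2 = 1 ∧ p.2.1 % 2 = 1 ∧ p.2.2 % 2 = 1} := by
  refine Nat.card_congr ?_
  refine
    { toFun := fun s => ⟨(2*s.1.1+1, 2*s.1.2.1+1, 2*s.1.2.2+1), ?_⟩
      invFun := fun s => ⟨((s.1.1-1)/2, (s.1.2.1-1)/2, (s.1.2.2-1)/2), ?_⟩
      left_inv := ?_, right_inv := ?_ }
  · obtain ⟨⟨x,y,z⟩, hs⟩ := s
    dsimp only at hs ⊢
    have hx := tri_key x; have hy := tri_key y; have hz := tri_key z
    exact ⟨by linear_combination 8*hs + 4*hx + 4*hy + 24*hz, by omega, by omega, by omega⟩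
  · obtain ⟨⟨X,Y,Z⟩, heq, h1, h2, h3⟩ := s
    dsimp only at heq h1 h2 h3 ⊢
    obtain ⟨x, rfl⟩ : ∃ x, X = 2*x+1 := ⟨(X-1)/2, by omega⟩
    obtain ⟨y, rfl⟩ : ∃ y, Y = 2*y+1 := ⟨(Y-1)/2, by omega⟩
    obtain ⟨z, rfl⟩ : ∃ z, Z = 2*z+1 := ⟨(Z-1)/2, by omega⟩
    rw [show (2*x+1-1)/2 = x by omega, show (2*y+1-1)/2 = y by omega,
      show (2*z+1-1)/2 = z by omega]
    have hx := tri_key x; have hy := tri_key y; have hz := tri_key z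
    have h8 : 8*(n:ℤ) = 8*(tri x + tri y + 6 * tri z) := by
      linear_combination heq - 4*hx - 4*hy - 24*hz
    linarith
  · intro s
    obtain ⟨⟨x,y,z⟩, hs⟩ := s
    apply Subtype.ext
    simp only [Prod.mk.injEq]
    exact ⟨by omega, by omega, by omega⟩
  · intro s
    obtain ⟨⟨X,Y,Z⟩, heq, h1, h2, h3⟩ := s
    dsimp only at h1 h2 h3
    apply Subtype.ext
    simp only [Prod.mk.injEq]
    exact ⟨by omega, by omega, by omega⟩


set_option maxHeartbeats 1000000 in
lemma card2 (n : ℕ) : Nat.card {p : ℤ×ℤ×ℤ // 8*((n:ℤ)+1) = p.1^2+p.2.1^2+6*p.2.2^2 ∧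
      p.1 % 2 = 1 ∧ p.2.1 % 2 = 1 ∧ p.2.2 % 2 = 1} =
    Nat.card {p : ℤ×ℤ×ℤ // 4*((n:ℤ)+1) = p.1^2+p.2.1^2+3*p.2.2^2 ∧ p.2.2 % 2 = 1} := by
  refine Nat.card_congr ?_
  refine
    { toFun := fun s => ⟨((s.1.1+s.1.2.1)/2, (s.1.1-s.1.2.1)/2, s.1.2.2), ?_⟩
      invFun := fun s => ⟨(s.1.1+s.1.2.1, s.1.1-s.1.2.1, s.1.2.2), ?_⟩
      left_inv := ?_, right_inv := ?_ }
  · obtain ⟨⟨X,Y,Z⟩, heq, h1, h2, h3⟩ := s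
    dsimp only at heq h1 h2 h3 ⊢
    obtain ⟨u, hu⟩ : ∃ u, X + Y = 2*u := ⟨(X+Y)/2, by omega⟩
    obtain ⟨v, hv⟩ : ∃ v, X - Y = 2*v := ⟨(X-Y)/2, by omega⟩
    rw [show (X+Y)/2 = u by omega, show (X-Y)/2 = v by omega]
    refine ⟨?_, h3⟩
    have key : 16*((n:ℤ)+1) = 4*(u^2+v^2+3*Z^2) := by
      linear_combination 2*heq + (X+Y+2*u)*hu + (X-Y+2*v)*hv
    linarith
  · obtain ⟨⟨u,v,Z⟩, heq, hz⟩ := s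
    dsimp only at heq hz ⊢
    have huv := parity_uv heq hz
    exact ⟨by linear_combination 2*heq, by omega, by omega, hz⟩
  · intro s
    obtain ⟨⟨X,Y,Z⟩, heq, h1, h2, h3⟩ := s
    dsimp only at h1 h2
    apply Subtype.ext
    simp only [Prod.mk.injEq]
    exact ⟨by omega, by omega, trivial⟩
  · intro s
    obtain ⟨⟨u,v,Z⟩, heq, hz⟩ := s
    apply Subtype.ext
    simp only [Prod.mk.injEq]
    exact ⟨by omega, by omega, trivial⟩


set_option maxHeartbeats 1000000 in
lemma card3 (n : ℕ) : Nat.card {p : ℤ×ℤ×ℤ // 4*((n:ℤ)+1) = p.1^2+p.2.1^2+3*p.2.2^2 ∧ p.2.2 % 2 = 1} =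
    2 * Nat.card {p : ℤ×ℤ×ℤ // 4*((n:ℤ)+1) = p.1^2+p.2.1^2+3*p.2.2^2 ∧
      p.1 % 2 = 0 ∧ p.2.2 % 2 = 1} := by
  have e : {p : ℤ×ℤ×ℤ // 4*((n:ℤ)+1) = p.1^2+p.2.1^2+3*p.2.2^2 ∧ p.2.2 % 2 = 1} ≃
      Bool × {p : ℤ×ℤ×ℤ // 4*((n:ℤ)+1) = p.1^2+p.2.1^2+3*p.2.2^2 ∧
        p.1 % 2 = 0 ∧ p.2.2 % 2 = 1} :=
    { toFun := fun s =>
        if hu : s.1.1 % 2 = 0 then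
          (false, ⟨s.1, s.2.1, hu, s.2.2⟩)
        else
          (true, ⟨(s.1.2.1, s.1.1, s.1.2.2), by
            have huv := parity_uv s.2.1 s.2.2
            exact ⟨by linear_combination s.2.1, by dsimp only; omega, s.2.2⟩⟩)
      invFun := fun x => match x with
        | (false, s) => ⟨s.1, s.2.1, s.2.2.2⟩
        | (true, s) => ⟨(s.1.2.1, s.1.1, s.1.2.2),
            by exact ⟨by linear_combination s.2.1, s.2.2.2⟩⟩
      left_inv := by
        intro s
        obtain ⟨⟨u,v,Z⟩, heq, hz⟩ := s
        dsimp only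
        split_ifs with h1 <;> rfl
      right_inv := by
        intro x
        obtain ⟨b, ⟨⟨u,v,Z⟩, heq, hu, hz⟩⟩ := x
        dsimp only at heq hu hz
        rcases b
        · dsimp only
          split_ifs <;> try rfl
        · dsimp only
          have huv := parity_uv heq hz
          split_ifs with h1
          · exfalso; omega
          · rfl }
  rw [Nat.card_congr e, Nat.card_prod, Nat.card_eq_fintype_card, Fintype.card_bool]


set_option maxHeartbeats 1000000 in
lemma card4 (n : ℕ) (hm4 : ((n : ℤ) + 1) % 4 = 2 ∨ ((n : ℤ) + 1) % 4 = 3) : Nat.card {p : ℤ×ℤ×ℤ // 4*((n:ℤ)+1) = p.1^2+p.2.1^2+3*p.2.2^2 ∧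
      p.1 % 2 = 0 ∧ p.2.2 % 2 = 1} =
    2 * Nat.card {q : ℤ×ℤ×ℤ // (n:ℤ) + 1 = q.1^2 + q.2.1^2 + 3*q.2.2^2} := by
  have e : {p : ℤ×ℤ×ℤ // 4*((n:ℤ)+1) = p.1^2+p.2.1^2+3*p.2.2^2 ∧
        p.1 % 2 = 0 ∧ p.2.2 % 2 = 1} ≃
      Bool × {q : ℤ×ℤ×ℤ // (n:ℤ) + 1 = q.1^2 + q.2.1^2 + 3*q.2.2^2} :=
    { toFun := fun s => match s with
        | ⟨(u, v, Z), hs⟩ =>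
          if h4 : (v - Z) % 4 = 0 then
            (false, ⟨(u/2, (v + 3*Z)/4, (Z - v)/4), by
              obtain ⟨heq, hu, hz⟩ := hs
              dsimp only at heq hu hz ⊢
              have hv : v % 2 = 1 := by have := parity_uv heq hz; omega
              obtain ⟨a, ha⟩ : ∃ a, u = 2*a := ⟨u/2, by omega⟩
              obtain ⟨b, hb⟩ : ∃ b, v + 3*Z = 4*b := ⟨(v + 3*Z)/4, by omega⟩
              obtain ⟨c, hc⟩ : ∃ c, Z - v = 4*c := ⟨(Z - v)/4, by omega⟩
              rw [show u/2 = a by omega, show (v + 3*Z)/4 = b by omega,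
                show (Z - v)/4 = c by omega]
              have key : 16*((n:ℤ)+1) = 16*(a^2+b^2+3*c^2) := by
                linear_combination 4*heq + 4*(u+2*a)*ha + (v + 3*Z + 4*b)*hb +
                  3*(Z - v + 4*c)*hc
              linarith⟩)
          else
            (true, ⟨(u/2, (v - 3*Z)/4, (Z + v)/4), by
              obtain ⟨heq, hu, hz⟩ := hs
              dsimp only at heq hu hz ⊢
              have hv : v % 2 = 1 := by have := parity_uv heq hz; omega
              obtain ⟨a, ha⟩ : ∃ a, u = 2*a := ⟨u/2, by omega⟩
              obtain ⟨b, hb⟩ : ∃ b, v - 3*Z = 4*b := ⟨(v - 3*Z)/4, by omega⟩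
              obtain ⟨c, hc⟩ : ∃ c, Z + v = 4*c := ⟨(Z + v)/4, by omega⟩
              rw [show u/2 = a by omega, show (v - 3*Z)/4 = b by omega,
                show (Z + v)/4 = c by omega]
              have key : 16*((n:ℤ)+1) = 16*(a^2+b^2+3*c^2) := by
                linear_combination 4*heq + 4*(u+2*a)*ha + (v - 3*Z + 4*b)*hb +
                  3*(Z + v + 4*c)*hc
              linarith⟩)
      invFun := fun x => match x with
        | (false, ⟨(A, B, C), hq⟩) => ⟨(2*A, B - 3*C, C + B), by
            dsimp only at hq ⊢
            have hbc := parity_bc hm4 hq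
            exact ⟨by linear_combination 4*hq, by omega, by omega⟩⟩
        | (true, ⟨(A, B, C), hq⟩) => ⟨(2*A, B + 3*C, C - B), by
            dsimp only at hq ⊢
            have hbc := parity_bc hm4 hq
            exact ⟨by linear_combination 4*hq, by omega, by omega⟩⟩
      left_inv := by
        intro s
        obtain ⟨⟨u,v,Z⟩, heq, hu, hz⟩ := s
        dsimp only at heq hu hz
        have hv : v % 2 = 1 := by have := parity_uv heq hz; omega
        dsimp only
        split_ifs with h1
        · apply Subtype.ext
          simp only [Prod.mk.injEq]
          exact ⟨by omega, by omega, by omega⟩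
        · apply Subtype.ext
          simp only [Prod.mk.injEq]
          exact ⟨by omega, by omega, by omega⟩
      right_inv := by
        intro x
        obtain ⟨b, ⟨⟨A,B,C⟩, hq⟩⟩ := x
        dsimp only at hq
        have hbc := parity_bc hm4 hq
        rcases b
        · dsimp only
          split_ifs with h1
          · simp only [Prod.mk.injEq]
            refine ⟨trivial, Subtype.ext ?_⟩
            simp only [Prod.mk.injEq]
            exact ⟨by omega, by omega, by omega⟩
          · exfalso; omega
        · dsimp only
          split_ifs with h1
          · exfalso; omega
          · simp only [Prod.mk.injEq]
            refine ⟨trivial, Subtype.ext ?_⟩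
            simp only [Prod.mk.injEq]
            exact ⟨by omega, by omega, by omega⟩ }
  rw [Nat.card_congr e, Nat.card_prod, Nat.card_eq_fintype_card, Fintype.card_bool]


set_option maxHeartbeats 1000000 in
theorem stmt10 (n : ℕ) (hn : 0 < n) (h : n % 4 = 1 ∨ n % 4 = 2) :
    t 1 1 6 n = 4 * N 1 1 3 (n + 1) := by
  have hm4 : ((n : ℤ) + 1) % 4 = 2 ∨ ((n : ℤ) + 1) % 4 = 3 := by omega
  -- step 0 : clean up casts
  have h0 : t 1 1 6 n =
      Nat.card {p : ℤ×ℤ×ℤ // (n:ℤ) = tri p.1 + tri p.2.1 + 6 * tri p.2.2} := by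
    unfold t
    exact Nat.card_congr (Equiv.subtypeEquivRight (fun p => by
      push_cast; constructor <;> intro h' <;> linarith))
  have hNc : N 1 1 3 (n+1) =
      Nat.card {q : ℤ×ℤ×ℤ // (n:ℤ) + 1 = q.1^2 + q.2.1^2 + 3*q.2.2^2} := by
    unfold N
    exact Nat.card_congr (Equiv.subtypeEquivRight (fun p => by
      push_cast; constructor <;> intro h' <;> linarith))
  -- step 1 : triangular numbers to odd squares
  -- step 2 : sums/differences of the two odd squares
  -- step 3 : split on the parity of the first coordinate
  -- step 4 : descend from 4(n+1) to n+1
  rw [h0, card1 n, card2 n, card3 n, card4 n hm4, hNc]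
  ring
end

section
/- For every positive integer n with n ≡ 7 or 11 (mod 16), 5·t(1,1,6;n) = 8·N(1,1,3;n+1), and for every positive integer n with n ≡ 3 (mod 32), 3·t(1,1,6;n) = 4·N(1,1,3;n+1). -/
namespace Stmt12Aux

lemma two_tri (x : ℤ) : 2 * tri x = x^2 + x := by
  have h : (2:ℤ) ∣ x * (x + 1) := (Int.even_mul_succ_self x).two_dvd
  unfold tri
  rw [Int.mul_ediv_cancel' h]
  ring

lemma sq_odd (x : ℤ) (h : x % 2 = 1) : ∃ a, x^2 = 8*a+1 := by
  obtain ⟨k, hk⟩ : ∃ k, x = 2*k+1 := ⟨(x-1)/2, by omega⟩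
  obtain ⟨u, hu⟩ := Int.even_mul_succ_self k
  refine ⟨u, ?_⟩
  subst hk
  linear_combination 4*hu

lemma sqG (x : ℤ) : ∃ a, (x^2 = 8*a ∧ x%2 = 0) ∨ (x^2 = 8*a+4 ∧ x%2=0) ∨ (x^2 = 8*a+1 ∧ x%2=1) := by
  rcases Int.emod_two_eq x with h | h
  · obtain ⟨k, hk⟩ : ∃ k, x = 2*k := ⟨x/2, by omega⟩
    rcases Int.emod_two_eq k with h2 | h2
    · obtain ⟨j, hj⟩ : ∃ j, k = 2*j := ⟨k/2, by omega⟩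
      exact ⟨2*j^2, Or.inl ⟨by subst hk; subst hj; ring, h⟩⟩
    · obtain ⟨a, ha⟩ := sq_odd k h2
      exact ⟨4*a, Or.inr (Or.inl ⟨by subst hk; linear_combination 4*ha, h⟩)⟩
  · obtain ⟨a, ha⟩ := sq_odd x h
    exact ⟨a, Or.inr (Or.inr ⟨ha, h⟩)⟩

def NP (m : ℤ) (p : ℤ × ℤ × ℤ) : Prop := m = p.1^2 + p.2.1^2 + 3*p.2.2^2
def AP (W : ℤ) (p : ℤ × ℤ × ℤ) : Prop := NP (4*W) p ∧ p.2.2 % 2 = 1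
def A1P (W : ℤ) (p : ℤ × ℤ × ℤ) : Prop := NP (4*W) p ∧ p.1 % 2 = 1 ∧ p.2.2 % 2 = 1
def MP (W : ℤ) (p : ℤ × ℤ × ℤ) : Prop := NP W p ∧ (p.2.1 + p.2.2) % 2 = 1
def TP (n : ℤ) (p : ℤ × ℤ × ℤ) : Prop := n = tri p.1 + tri p.2.1 + 6 * tri p.2.2

noncomputable def cN (m : ℤ) : ℕ := Nat.card {p // NP m p}
noncomputable def cA (W : ℤ) : ℕ := Nat.card {p // AP W p}
noncomputable def cA1 (W : ℤ) : ℕ := Nat.card {p // A1P W p}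
noncomputable def cM (W : ℤ) : ℕ := Nat.card {p // MP W p}
noncomputable def cT (n : ℤ) : ℕ := Nat.card {p // TP n p}

lemma finNP (m : ℤ) : Finite {p : ℤ×ℤ×ℤ // NP m p} := by
  have key : ∀ w : ℤ, w^2 ≤ m → -m ≤ w ∧ w ≤ m := by
    intro w hw
    have h1 : w ≤ w^2 := by
      rcases le_or_gt w 0 with h | h
      · nlinarith [sq_nonneg w]
      · nlinarith
    have h2 : -w ≤ w^2 := by
      rcases le_or_gt 0 w with h | h
      · nlinarith [sq_nonneg w]
      · nlinarith
    constructor <;> linarith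
  have hs : {p : ℤ×ℤ×ℤ | NP m p} ⊆
      (Set.Icc (-m) m) ×ˢ ((Set.Icc (-m) m) ×ˢ (Set.Icc (-m) m)) := by
    rintro ⟨x, y, z⟩ h
    simp only [NP, Set.mem_setOf_eq] at h
    have hx := key x (by nlinarith [sq_nonneg y, sq_nonneg z])
    have hy := key y (by nlinarith [sq_nonneg x, sq_nonneg z])
    have hz := key z (by nlinarith [sq_nonneg x, sq_nonneg y, sq_nonneg z])
    exact ⟨⟨hx.1, hx.2⟩, ⟨hy.1, hy.2⟩, ⟨hz.1, hz.2⟩⟩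
  have : Set.Finite {p : ℤ×ℤ×ℤ | NP m p} :=
    Set.Finite.subset (((Set.finite_Icc _ _).prod ((Set.finite_Icc _ _).prod (Set.finite_Icc _ _)))) hs
  exact this.to_subtype

lemma finOf (m : ℤ) (P : ℤ×ℤ×ℤ → Prop) (h : ∀ p, P p → NP m p) : Finite {p // P p} := by
  have := finNP m
  exact Finite.of_injective (fun s => (⟨s.1, h s.1 s.2⟩ : {p // NP m p}))
    (fun a b hab => by cases a; cases b; simpa [Subtype.mk.injEq] using hab)

lemma card_split (P Q : (ℤ×ℤ×ℤ) → Prop) (hf : Finite {p // P p}) :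
    Nat.card {p // P p} = Nat.card {p // P p ∧ Q p} + Nat.card {p // P p ∧ ¬ Q p} := by
  classical
  haveI := hf
  haveI : Finite {p // P p ∧ Q p} :=
    Finite.of_injective (fun s => (⟨s.1, s.2.1⟩ : {p // P p}))
      (fun a b hab => by cases a; cases b; simpa [Subtype.mk.injEq] using hab)
  haveI : Finite {p // P p ∧ ¬ Q p} :=
    Finite.of_injective (fun s => (⟨s.1, s.2.1⟩ : {p // P p}))
      (fun a b hab => by cases a; cases b; simpa [Subtype.mk.injEq] using hab)
  have e : {p // P p ∧ Q p} ⊕ {p // P p ∧ ¬ Q p} ≃ {p // P p} :=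
    (Equiv.sumCongr (Equiv.subtypeSubtypeEquivSubtypeInter P Q).symm
      (Equiv.subtypeSubtypeEquivSubtypeInter P (fun a => ¬ Q a)).symm).trans
      (Equiv.sumCompl fun x : {p // P p} => Q x.1)
  rw [← Nat.card_congr e, Nat.card_sum]



-- parity helper lemmas
lemma oneOdd {W X Y z : ℤ} (heq : 4*W = X^2+Y^2+3*z^2) (hz : z%2=1) : (X+Y)%2 = 1 := by
  obtain ⟨a, ha⟩ := sqG X; obtain ⟨b, hb⟩ := sqG Y; obtain ⟨c, hc⟩ := sqG z; omega

lemma yEven {W X Y z : ℤ} (heq : 4*W = X^2+Y^2+3*z^2) (hX : X%2=1) (hz : z%2=1) : Y%2 = 0 := by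
  obtain ⟨a, ha⟩ := sqG X; obtain ⟨b, hb⟩ := sqG Y; obtain ⟨c, hc⟩ := sqG z; omega

lemma l4back {K X Y z : ℤ} (heq : 4*K = X^2+Y^2+3*z^2) (hyz : (Y+z)%2=1) :
    X%2=1 ∧ z%2=1 := by
  obtain ⟨a, ha⟩ := sqG X; obtain ⟨b, hb⟩ := sqG Y; obtain ⟨c, hc⟩ := sqG z; omega

lemma evenHalf {K x y z : ℤ} (heq : 4*K = x^2+y^2+3*z^2) (hz : z%2=0) : x%2=0 ∧ y%2=0 := by
  obtain ⟨a, ha⟩ := sqG x; obtain ⟨b, hb⟩ := sqG y; obtain ⟨c, hc⟩ := sqG z; omega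

lemma cls6 {u x y z : ℤ} (hu : u%4=3) (heq : u = x^2+y^2+3*z^2) :
    x%2=0 ∧ y%2=0 ∧ z%2=1 := by
  obtain ⟨a, ha⟩ := sqG x; obtain ⟨b, hb⟩ := sqG y; obtain ⟨c, hc⟩ := sqG z; omega

lemma cls7a {u x y z : ℤ} (hu : u%8=1) (heq : u = x^2+y^2+3*z^2) (hy : y%2=1) : z%2=0 := by
  obtain ⟨a, ha⟩ := sqG x; obtain ⟨b, hb⟩ := sqG y; obtain ⟨c, hc⟩ := sqG z; omega

lemma cls7b {u x y z : ℤ} (hu : u%8=1) (heq : u = x^2+y^2+3*z^2) (hyz : (y+z)%2=1) : y%2=1 := by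
  obtain ⟨a, ha⟩ := sqG x; obtain ⟨b, hb⟩ := sqG y; obtain ⟨c, hc⟩ := sqG z; omega

lemma cls7c {u x y z : ℤ} (hu : u%8=1) (heq : u = x^2+y^2+3*z^2) (hy : y%2=0) : x%2=1 := by
  obtain ⟨a, ha⟩ := sqG x; obtain ⟨b, hb⟩ := sqG y; obtain ⟨c, hc⟩ := sqG z; omega

lemma cls8 {v x y z : ℤ} (hv : v%2=1) (heq : 2*v = x^2+y^2+3*z^2) :
    x%2=1 ∧ y%2=1 ∧ z%2=0 := by
  obtain ⟨a, ha⟩ := sqG x; obtain ⟨b, hb⟩ := sqG y; obtain ⟨c, hc⟩ := sqG z; omega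

-- L1 : triangular-number count equals A(n+1)
lemma l1 (n : ℤ) : cT n = cA (n+1) := by
  refine Nat.card_congr (Equiv.ofBijective
    (fun p => ⟨(p.1.1 + p.1.2.1 + 1, p.1.1 - p.1.2.1, 2*p.1.2.2 + 1), ?_⟩) ⟨?_, ?_⟩)
  · obtain ⟨⟨x, y, z⟩, h⟩ := p
    have h' : n = tri x + tri y + 6 * tri z := h
    constructor
    · show 4*(n+1) = (x+y+1)^2 + (x-y)^2 + 3*(2*z+1)^2
      linear_combination 4*h' + 2*two_tri x + 2*two_tri y + 12*two_tri z
    · show (2*z+1) % 2 = 1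
      omega
  · rintro ⟨⟨x, y, z⟩, h⟩ ⟨⟨x', y', z'⟩, h'⟩ heq
    simp only [Subtype.mk.injEq, Prod.mk.injEq] at heq
    apply Subtype.ext
    simp only [Prod.mk.injEq]
    refine ⟨by omega, by omega, by omega⟩
  · rintro ⟨⟨X, Y, Z⟩, h1, h2⟩
    have h1' : 4*(n+1) = X^2 + Y^2 + 3*Z^2 := h1
    have h2' : Z % 2 = 1 := h2
    have hXY : (X+Y) % 2 = 1 := oneOdd h1' h2'
    obtain ⟨k, hk⟩ : ∃ k, X = 2*k+1 - Y := ⟨(X+Y-1)/2, by omega⟩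
    obtain ⟨cz, hcz⟩ : ∃ c, Z = 2*c+1 := ⟨(Z-1)/2, by omega⟩
    subst hk; subst hcz
    refine ⟨⟨(k, k-Y, cz), ?_⟩, ?_⟩
    · show n = tri k + tri (k-Y) + 6 * tri cz
      have key : 8*n = 8*(tri k + tri (k-Y) + 6*tri cz) := by
        linear_combination 2*h1' - 4*two_tri k - 4*two_tri (k-Y) - 24*two_tri cz
      omega
    · apply Subtype.ext
      show (k + (k-Y) + 1, k - (k-Y), 2*cz+1) = (2*k+1-Y, Y, 2*cz+1)
      simp only [Prod.mk.injEq]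
      all_goals and_intros <;> first | trivial | omega

-- L2 : A = 2 * A1
lemma l2 (W : ℤ) : cA W = 2 * cA1 W := by
  have hsplit := card_split (AP W) (fun p => p.1 % 2 = 1) (finOf (4*W) _ (fun p hp => hp.1))
  have e1 : Nat.card {p // AP W p ∧ p.1 % 2 = 1} = cA1 W :=
    Nat.card_congr (Equiv.subtypeEquivRight (fun p =>
      ⟨fun h => ⟨h.1.1, h.2, h.1.2⟩, fun h => ⟨⟨h.1, h.2.2⟩, h.2.1⟩⟩))
  have e2 : Nat.card {p // AP W p ∧ ¬ (p.1 % 2 = 1)} = cA1 W := by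
    refine Nat.card_congr (Equiv.ofBijective
      (fun p => ⟨(p.1.2.1, p.1.1, p.1.2.2), ?_⟩) ⟨?_, ?_⟩)
    · obtain ⟨⟨X, Y, z⟩, ⟨hNP, hz⟩, hX⟩ := p
      have heq : 4*W = X^2+Y^2+3*z^2 := hNP
      have hz' : z % 2 = 1 := hz
      have hY : Y % 2 = 1 := by have := oneOdd heq hz'; omega
      exact ⟨by show 4*W = Y^2+X^2+3*z^2; linear_combination heq, hY, hz'⟩
    · rintro ⟨⟨x, y, z⟩, h⟩ ⟨⟨x', y', z'⟩, h'⟩ heq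
      simp only [Subtype.mk.injEq, Prod.mk.injEq] at heq
      apply Subtype.ext
      simp only [Prod.mk.injEq]
      refine ⟨by omega, by omega, by omega⟩
    · rintro ⟨⟨X, Y, z⟩, hNP, hX, hz⟩
      have heq : 4*W = X^2+Y^2+3*z^2 := hNP
      have hY : Y % 2 = 0 := yEven heq hX hz
      exact ⟨⟨(Y, X, z), ⟨⟨by show 4*W = Y^2+X^2+3*z^2; linear_combination heq, hz⟩, by omega⟩⟩,
        Subtype.ext rfl⟩
  rw [cA, hsplit, e1, e2]; ring


-- L3 : A1 = 2 * M
lemma l3 (W : ℤ) : cA1 W = 2 * cM W := by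
  have hsplit := card_split (A1P W) (fun p => (p.1 + 3*p.2.2) % 4 = 0)
    (finOf (4*W) _ (fun p hp => hp.1))
  beta_reduce at hsplit
  have e1 : Nat.card {p : ℤ×ℤ×ℤ // A1P W p ∧ (p.1 + 3*p.2.2) % 4 = 0} = cM W := by
    refine Nat.card_congr (Equiv.ofBijective
      (fun p => ⟨(p.1.2.1/2, (p.1.1 + 3*p.1.2.2)/4, (p.1.1 - p.1.2.2)/4), ?_⟩) ⟨?_, ?_⟩)
    · obtain ⟨⟨X, Y, z⟩, ⟨hNP, hX0, hz0⟩, h40⟩ := p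
      have heq : 4*W = X^2+Y^2+3*z^2 := hNP
      have hX : X % 2 = 1 := hX0
      have hz : z % 2 = 1 := hz0
      have h4 : (X + 3*z) % 4 = 0 := h40
      have hY : Y % 2 = 0 := yEven heq hX hz
      show MP W (Y/2, (X + 3*z)/4, (X - z)/4)
      obtain ⟨b, hb1, hb2⟩ : ∃ b, Y/2 = b ∧ Y = 2*b := ⟨Y/2, rfl, by omega⟩
      obtain ⟨pp, hp1, hp2⟩ : ∃ a, (X+3*z)/4 = a ∧ X+3*z = 4*a := ⟨(X+3*z)/4, rfl, by omega⟩
      obtain ⟨qq, hq1, hq2⟩ : ∃ a, (X-z)/4 = a ∧ X-z = 4*a := ⟨(X-z)/4, rfl, by omega⟩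
      rw [hb1, hp1, hq1]
      have hXv : X = pp + 3*qq := by omega
      have hzv : z = pp - qq := by omega
      constructor
      · show W = b^2 + pp^2 + 3*qq^2
        have key : 4*W = 4*(b^2+pp^2+3*qq^2) := by
          linear_combination heq + (X + pp + 3*qq)*hXv + (Y + 2*b)*hb2 + 3*(z + pp - qq)*hzv
        omega
      · show (pp + qq) % 2 = 1
        omega
    · rintro ⟨⟨X, Y, z⟩, ⟨hNP, hX0, hz0⟩, h40⟩ ⟨⟨X', Y', z'⟩, ⟨hNP', hX0', hz0'⟩, h40'⟩ heq2
      have hX : X % 2 = 1 := hX0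
      have hz : z % 2 = 1 := hz0
      have h4 : (X + 3*z) % 4 = 0 := h40
      have hX' : X' % 2 = 1 := hX0'
      have hz' : z' % 2 = 1 := hz0'
      have h4' : (X' + 3*z') % 4 = 0 := h40'
      have heqa : 4*W = X^2+Y^2+3*z^2 := hNP
      have heqb : 4*W = X'^2+Y'^2+3*z'^2 := hNP'
      have hY : Y % 2 = 0 := yEven heqa hX hz
      have hY' : Y' % 2 = 0 := yEven heqb hX' hz'
      have heq3 : (Y/2, (X + 3*z)/4, (X - z)/4) = ((Y'/2 : ℤ), (X' + 3*z')/4, (X' - z')/4) := by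
        exact congrArg Subtype.val heq2
      simp only [Prod.mk.injEq] at heq3
      apply Subtype.ext
      show (X, Y, z) = (X', Y', z')
      simp only [Prod.mk.injEq]
      refine ⟨by omega, by omega, by omega⟩
    · rintro ⟨⟨b, pp, qq⟩, hNP, hpq0⟩
      have heq : W = b^2+pp^2+3*qq^2 := hNP
      have hpq : (pp + qq) % 2 = 1 := hpq0
      refine ⟨⟨(pp + 3*qq, 2*b, pp - qq),
        ⟨⟨?_, by show (pp+3*qq) % 2 = 1; omega, by show (pp-qq) % 2 = 1; omega⟩,
          by show ((pp+3*qq) + 3*(pp-qq)) % 4 = 0; omega⟩⟩, ?_⟩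
      · show 4*W = (pp+3*qq)^2 + (2*b)^2 + 3*(pp-qq)^2
        linear_combination 4*heq
      · apply Subtype.ext
        show ((2*b)/2, ((pp+3*qq) + 3*(pp-qq))/4, ((pp+3*qq) - (pp-qq))/4) = (b, pp, qq)
        simp only [Prod.mk.injEq]
        refine ⟨by omega, by omega, by omega⟩
  have e2 : Nat.card {p : ℤ×ℤ×ℤ // A1P W p ∧ ¬ ((p.1 + 3*p.2.2) % 4 = 0)} =
      Nat.card {p : ℤ×ℤ×ℤ // A1P W p ∧ (p.1 + 3*p.2.2) % 4 = 0} := by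
    refine Nat.card_congr (Equiv.ofBijective
      (fun p => ⟨(p.1.1, p.1.2.1, -p.1.2.2), ?_⟩) ⟨?_, ?_⟩)
    · obtain ⟨⟨X, Y, z⟩, ⟨hNP, hX0, hz0⟩, h40⟩ := p
      have heq : 4*W = X^2+Y^2+3*z^2 := hNP
      have hX : X % 2 = 1 := hX0
      have hz : z % 2 = 1 := hz0
      have h4 : ¬ ((X + 3*z) % 4 = 0) := h40
      refine ⟨⟨?_, hX0, by show (-z) % 2 = 1; omega⟩, by show (X + 3*(-z)) % 4 = 0; omega⟩
      show 4*W = X^2+Y^2+3*(-z)^2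
      linear_combination heq
    · rintro ⟨⟨X, Y, z⟩, h⟩ ⟨⟨X', Y', z'⟩, h'⟩ heq2
      have heq3 : (X, Y, -z) = ((X' : ℤ), Y', -z') := congrArg Subtype.val heq2
      simp only [Prod.mk.injEq] at heq3
      apply Subtype.ext
      show (X, Y, z) = (X', Y', z')
      simp only [Prod.mk.injEq]
      refine ⟨by omega, by omega, by omega⟩
    · rintro ⟨⟨X, Y, z⟩, ⟨hNP, hX0, hz0⟩, h40⟩
      have heq : 4*W = X^2+Y^2+3*z^2 := hNP
      have hX : X % 2 = 1 := hX0
      have hz : z % 2 = 1 := hz0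
      have h4 : (X + 3*z) % 4 = 0 := h40
      refine ⟨⟨(X, Y, -z), ⟨⟨?_, hX0, by show (-z) % 2 = 1; omega⟩,
        by show ¬ ((X + 3*(-z)) % 4 = 0); omega⟩⟩, ?_⟩
      · show 4*W = X^2+Y^2+3*(-z)^2
        linear_combination heq
      · apply Subtype.ext
        show (X, Y, -(-z)) = (X, Y, z)
        simp only [neg_neg]
  rw [cA1, hsplit, e2, e1]; ring

-- L4 : A1(K) = M(4K)
lemma l4 (K : ℤ) : cA1 K = cM (4*K) := by
  refine Nat.card_congr (Equiv.subtypeEquivRight (fun p => ?_))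
  obtain ⟨X, Y, z⟩ := p
  constructor
  · rintro ⟨hNP, hX0, hz0⟩
    have heq : 4*K = X^2+Y^2+3*z^2 := hNP
    have hX : X % 2 = 1 := hX0
    have hz : z % 2 = 1 := hz0
    have hY : Y % 2 = 0 := yEven heq hX hz
    exact ⟨hNP, by show (Y + z) % 2 = 1; omega⟩
  · rintro ⟨hNP, hyz0⟩
    have heq : 4*K = X^2+Y^2+3*z^2 := hNP
    have hyz : (Y + z) % 2 = 1 := hyz0
    have h := l4back heq hyz
    exact ⟨hNP, h.1, h.2⟩

-- L5 : N(4K) = N(K) + A(K)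
lemma l5 (K : ℤ) : cN (4*K) = cN K + cA K := by
  have hsplit := card_split (NP (4*K)) (fun p => p.2.2 % 2 = 0) (finNP _)
  beta_reduce at hsplit
  have e1 : Nat.card {p : ℤ×ℤ×ℤ // NP (4*K) p ∧ p.2.2 % 2 = 0} = cN K := by
    refine Nat.card_congr (Equiv.ofBijective
      (fun p => ⟨(p.1.1/2, p.1.2.1/2, p.1.2.2/2), ?_⟩) ⟨?_, ?_⟩)
    · obtain ⟨⟨x, y, z⟩, hNP, hz0⟩ := p
      have heq : 4*K = x^2+y^2+3*z^2 := hNP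
      have hz : z % 2 = 0 := hz0
      obtain ⟨hx, hy⟩ := evenHalf heq hz
      show NP K (x/2, y/2, z/2)
      obtain ⟨a, ha1, ha2⟩ : ∃ a, x/2 = a ∧ x = 2*a := ⟨x/2, rfl, by omega⟩
      obtain ⟨b, hb1, hb2⟩ : ∃ a, y/2 = a ∧ y = 2*a := ⟨y/2, rfl, by omega⟩
      obtain ⟨c, hc1, hc2⟩ : ∃ a, z/2 = a ∧ z = 2*a := ⟨z/2, rfl, by omega⟩
      rw [ha1, hb1, hc1]
      show K = a^2 + b^2 + 3*c^2
      have key : 4*K = 4*(a^2+b^2+3*c^2) := by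
        linear_combination heq + (x+2*a)*ha2 + (y+2*b)*hb2 + 3*(z+2*c)*hc2
      omega
    · rintro ⟨⟨x, y, z⟩, hNP, hz0⟩ ⟨⟨x', y', z'⟩, hNP', hz0'⟩ heq2
      have hz : z % 2 = 0 := hz0
      have hz' : z' % 2 = 0 := hz0'
      have heqa : 4*K = x^2+y^2+3*z^2 := hNP
      have heqb : 4*K = x'^2+y'^2+3*z'^2 := hNP'
      obtain ⟨hx, hy⟩ := evenHalf heqa hz
      obtain ⟨hx', hy'⟩ := evenHalf heqb hz'
      have heq3 : (x/2, y/2, z/2) = ((x'/2 : ℤ), y'/2, z'/2) := congrArg Subtype.val heq2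
      simp only [Prod.mk.injEq] at heq3
      apply Subtype.ext
      show (x, y, z) = (x', y', z')
      simp only [Prod.mk.injEq]
      refine ⟨by omega, by omega, by omega⟩
    · rintro ⟨⟨a, b, c⟩, hNP⟩
      have heq : K = a^2+b^2+3*c^2 := hNP
      refine ⟨⟨(2*a, 2*b, 2*c), ?_, by show (2*c) % 2 = 0; omega⟩, ?_⟩
      · show 4*K = (2*a)^2+(2*b)^2+3*(2*c)^2
        linear_combination 4*heq
      · apply Subtype.ext
        show ((2*a)/2, (2*b)/2, (2*c)/2) = (a, b, c)
        simp only [Prod.mk.injEq]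
        refine ⟨by omega, by omega, by omega⟩
  have e2 : Nat.card {p : ℤ×ℤ×ℤ // NP (4*K) p ∧ ¬ (p.2.2 % 2 = 0)} = cA K :=
    Nat.card_congr (Equiv.subtypeEquivRight (fun p =>
      ⟨fun h => ⟨h.1, by have h2 := h.2; show p.2.2 % 2 = 1; omega⟩,
       fun h => ⟨h.1, by have h2 := h.2; show ¬ (p.2.2 % 2 = 0); omega⟩⟩))
  rw [cN, hsplit, e1, e2]

-- L6
lemma l6 {u : ℤ} (hu : u % 4 = 3) : cN u = cM u := by
  refine Nat.card_congr (Equiv.subtypeEquivRight (fun p => ?_))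
  obtain ⟨x, y, z⟩ := p
  constructor
  · intro hNP
    have heq : u = x^2+y^2+3*z^2 := hNP
    obtain ⟨h1, h2, h3⟩ := cls6 hu heq
    exact ⟨hNP, by show (y + z) % 2 = 1; omega⟩
  · exact fun h => h.1

-- L7
lemma l7 {u : ℤ} (hu : u % 8 = 1) : cN u = 2 * cM u := by
  have hsplit := card_split (NP u) (fun p => p.2.1 % 2 = 1) (finNP u)
  beta_reduce at hsplit
  have e1 : Nat.card {p : ℤ×ℤ×ℤ // NP u p ∧ p.2.1 % 2 = 1} = cM u := by
    refine Nat.card_congr (Equiv.subtypeEquivRight (fun p => ?_))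
    obtain ⟨x, y, z⟩ := p
    constructor
    · rintro ⟨hNP, hy0⟩
      have heq : u = x^2+y^2+3*z^2 := hNP
      have hy : y % 2 = 1 := hy0
      have hz := cls7a hu heq hy
      exact ⟨hNP, by show (y + z) % 2 = 1; omega⟩
    · rintro ⟨hNP, hyz0⟩
      have heq : u = x^2+y^2+3*z^2 := hNP
      have hyz : (y + z) % 2 = 1 := hyz0
      exact ⟨hNP, cls7b hu heq hyz⟩
  have e2 : Nat.card {p : ℤ×ℤ×ℤ // NP u p ∧ ¬ (p.2.1 % 2 = 1)} =
      Nat.card {p : ℤ×ℤ×ℤ // NP u p ∧ p.2.1 % 2 = 1} := by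
    refine Nat.card_congr (Equiv.ofBijective
      (fun p => ⟨(p.1.2.1, p.1.1, p.1.2.2), ?_⟩) ⟨?_, ?_⟩)
    · obtain ⟨⟨x, y, z⟩, hNP, hy0⟩ := p
      have heq : u = x^2+y^2+3*z^2 := hNP
      have hy : ¬ (y % 2 = 1) := hy0
      have hx : x % 2 = 1 := cls7c hu heq (by omega)
      exact ⟨by show u = y^2+x^2+3*z^2; linear_combination heq, hx⟩
    · rintro ⟨⟨x, y, z⟩, h⟩ ⟨⟨x', y', z'⟩, h'⟩ heq2
      have heq3 : (y, x, z) = ((y' : ℤ), x', z') := congrArg Subtype.val heq2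
      simp only [Prod.mk.injEq] at heq3
      apply Subtype.ext
      show (x, y, z) = (x', y', z')
      simp only [Prod.mk.injEq]
      refine ⟨by omega, by omega, by omega⟩
    · rintro ⟨⟨x, y, z⟩, hNP, hy0⟩
      have heq : u = x^2+y^2+3*z^2 := hNP
      have hy : y % 2 = 1 := hy0
      have hx : x % 2 = 0 := by
        obtain ⟨a, ha⟩ := sqG x; obtain ⟨b, hb⟩ := sqG y; obtain ⟨c, hc⟩ := sqG z; omega
      exact ⟨⟨(y, x, z), ⟨by show u = y^2+x^2+3*z^2; linear_combination heq,
        by show ¬ (x % 2 = 1); omega⟩⟩, Subtype.ext rfl⟩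
  rw [cN, hsplit, e2, e1]; ring

-- L8
lemma l8 {v : ℤ} (hv : v % 2 = 1) : cN (2*v) = cM (2*v) := by
  refine Nat.card_congr (Equiv.subtypeEquivRight (fun p => ?_))
  obtain ⟨x, y, z⟩ := p
  constructor
  · intro hNP
    have heq : 2*v = x^2+y^2+3*z^2 := hNP
    obtain ⟨h1, h2, h3⟩ := cls8 hv heq
    exact ⟨hNP, by show (y + z) % 2 = 1; omega⟩
  · exact fun h => h.1

end Stmt12Aux

namespace Stmt12Aux

lemma cA_eq (W : ℤ) : cA W = 4 * cM W := by rw [l2, l3]; ring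

lemma cT_t (n : ℕ) : t 1 1 6 n = cT (n : ℤ) := by
  unfold t cT
  refine Nat.card_congr (Equiv.subtypeEquivRight (fun p => ?_))
  unfold TP
  push_cast
  constructor <;> intro h <;> linarith

lemma cN_N (n : ℕ) : N 1 1 3 (n+1) = cN ((n:ℤ)+1) := by
  unfold N cN
  refine Nat.card_congr (Equiv.subtypeEquivRight (fun p => ?_))
  unfold NP
  push_cast
  constructor <;> intro h <;> linarith

end Stmt12Aux

open Stmt12Aux in
theorem stmt12 (n : ℕ) (hn : 0 < n) :
    ((n % 16 = 7 ∨ n % 16 = 11) → 5 * t 1 1 6 n = 8 * N 1 1 3 (n + 1)) ∧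
    (n % 32 = 3 → 3 * t 1 1 6 n = 4 * N 1 1 3 (n + 1)) := by
  have ht := cT_t n
  have hNN := cN_N n
  have e1 : cT (n:ℤ) = cA ((n:ℤ)+1) := l1 (n:ℤ)
  constructor
  · rintro (h7 | h11)
    · obtain ⟨v, hv, hvo⟩ : ∃ v:ℤ, (n:ℤ) + 1 = 8*v ∧ v % 2 = 1 :=
        ⟨((n:ℤ)+1)/8, by omega, by omega⟩
      have c1 : cA ((n:ℤ)+1) = 4 * cM (4*(2*v)) := by
        rw [hv, show (8:ℤ)*v = 4*(2*v) by ring, cA_eq]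
      have c2 : cM (4*(2*v)) = cA1 (2*v) := (l4 (2*v)).symm
      have c3 : cA1 (2*v) = 2 * cM (2*v) := l3 (2*v)
      have c4 : cM (2*v) = cN (2*v) := (l8 hvo).symm
      have c5 : cN ((n:ℤ)+1) = cN (2*v) + cA (2*v) := by
        rw [hv, show (8:ℤ)*v = 4*(2*v) by ring, l5]
      have c6 : cA (2*v) = 4 * cM (2*v) := cA_eq (2*v)
      omega
    · obtain ⟨u, hu, hu4⟩ : ∃ u:ℤ, (n:ℤ) + 1 = 4*u ∧ u % 4 = 3 :=
        ⟨((n:ℤ)+1)/4, by omega, by omega⟩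
      have c1 : cA ((n:ℤ)+1) = 4 * cM (4*u) := by rw [hu, cA_eq]
      have c2 : cM (4*u) = cA1 u := (l4 u).symm
      have c3 : cA1 u = 2 * cM u := l3 u
      have c4 : cM u = cN u := (l6 hu4).symm
      have c5 : cN ((n:ℤ)+1) = cN u + cA u := by rw [hu, l5]
      have c6 : cA u = 4 * cM u := cA_eq u
      omega
  · intro h3
    obtain ⟨u, hu, hu8⟩ : ∃ u:ℤ, (n:ℤ) + 1 = 4*u ∧ u % 8 = 1 :=
      ⟨((n:ℤ)+1)/4, by omega, by omega⟩
    have c1 : cA ((n:ℤ)+1) = 4 * cM (4*u) := by rw [hu, cA_eq]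
    have c2 : cM (4*u) = cA1 u := (l4 u).symm
    have c3 : cA1 u = 2 * cM u := l3 u
    have c4 : cN u = 2 * cM u := l7 hu8
    have c5 : cN ((n:ℤ)+1) = cN u + cA u := by rw [hu, l5]
    have c6 : cA u = 4 * cM u := cA_eq u
    omega
end

section
/- For every positive integer n with n ≡ 0 (mod 4), t(1,3,48;n) = t(1,6,6;n/4) and t(1,3,48;n) = 2·N(1,3,48;2n+13). -/
/-!
Since `8 * tri x + 1 = (2x + 1)²`, `t(a,b,c;n)` counts the representations of `8n + a + b + c`
by `aX² + bY² + cZ²` with `X, Y, Z` odd. Put `M = 2n + 13 ≡ 5 (mod 8)`; then every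
representation `M = u² + 3v² + 48w²` has `u` odd and `v ≡ 2 (mod 4)`. The identities
`(u + 12w)² + 3(u - 4w)² = 4(u² + 48w²)` and `6(k + 2w)² + 6(k - 2w)² = 3(2k)² + 48w²` match
these representations with the odd representations of `4M` by `(1,3,48)` having `X ≡ Y (mod 16)`,
and with the odd representations of `M = 8(n/4) + 13` by `(1,6,6)` having `B ≡ C (mod 4)`.
Changing the sign of `Y`, resp. `C`, exchanges these with the remaining odd representations
(for the first form because `32 ∣ X² - Y²` forces exactly one of `X ≡ ±Y (mod 16)`).
-/

theorem Nat.card_eq_two_mul_card_subtype_of_involutive {α : Type*} {σ : α → α}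
    (hσ : Function.Involutive σ) {P : α → Prop} (hP : ∀ x, P (σ x) ↔ ¬P x) :
    Nat.card α = 2 * Nat.card {x // P x} := by
  classical
  let swap : {x // ¬P x} ≃ {x // P x} := (hσ.toPerm σ).subtypeEquiv fun x => (hP x).symm
  calc Nat.card α = Nat.card ({x // P x} ⊕ {x // P x}) :=
        Nat.card_congr <| (Equiv.sumCompl P).symm.trans ((Equiv.refl _).sumCongr swap)
    _ = Nat.card (Bool × {x // P x}) := Nat.card_congr (Equiv.boolProdEquivSum _).symm
    _ = 2 * Nat.card {x // P x} := by simp [Nat.card_prod]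

theorem eight_mul_tri_add_one (x : ℤ) : 8 * tri x + 1 = (2 * x + 1) ^ 2 := by
  have : 2 * tri x = x * (x + 1) := Int.mul_ediv_cancel' (Int.even_mul_succ_self x).two_dvd
  linear_combination 4 * this

theorem sq_eq_eight_mul_tri_add_one {X : ℤ} (hX : Odd X) : X ^ 2 = 8 * tri (X / 2) + 1 := by
  obtain ⟨k, rfl⟩ := hX
  rw [eight_mul_tri_add_one]
  congr 2
  omega

theorem Int.sq_emod_eight_of_odd {X : ℤ} (hX : Odd X) : X ^ 2 % 8 = 1 := by
  rw [sq_eq_eight_mul_tri_add_one hX]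
  omega

theorem Int.sq_emod_eight (u : ℤ) :
    (u % 2 = 1 ∧ u ^ 2 % 8 = 1) ∨ (u % 4 = 2 ∧ u ^ 2 % 8 = 4) ∨
      (u % 4 = 0 ∧ u ^ 2 % 8 = 0) := by
  have h : u ^ 2 % 8 = (u % 8) ^ 2 % 8 := by rw [pow_two, pow_two, Int.mul_emod]
  have : 0 ≤ u % 8 := Int.emod_nonneg u (by norm_num)
  have : u % 8 < 8 := Int.emod_lt_of_pos u (by norm_num)
  interval_cases hr : u % 8 <;> omega

def reps (a b c M : ℤ) : Set (ℤ × ℤ × ℤ) :=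
  {p | M = a * p.1 ^ 2 + b * p.2.1 ^ 2 + c * p.2.2 ^ 2}

def oddReps (a b c M : ℤ) : Set (ℤ × ℤ × ℤ) :=
  {p | M = a * p.1 ^ 2 + b * p.2.1 ^ 2 + c * p.2.2 ^ 2 ∧ Odd p.1 ∧ Odd p.2.1 ∧ Odd p.2.2}

@[simp]
theorem mem_reps {a b c M : ℤ} {p : ℤ × ℤ × ℤ} :
    p ∈ reps a b c M ↔ M = a * p.1 ^ 2 + b * p.2.1 ^ 2 + c * p.2.2 ^ 2 := Iff.rfl

@[simp]
theorem mem_oddReps {a b c M : ℤ} {p : ℤ × ℤ × ℤ} :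
    p ∈ oddReps a b c M ↔
      M = a * p.1 ^ 2 + b * p.2.1 ^ 2 + c * p.2.2 ^ 2 ∧ Odd p.1 ∧ Odd p.2.1 ∧ Odd p.2.2 :=
  Iff.rfl

theorem N_eq_card_reps (a b c n : ℕ) : N a b c n = Nat.card (reps a b c n) := rfl

theorem t_eq_card_oddReps (a b c n : ℕ) {M : ℤ} (hM : M = 8 * n + a + b + c) :
    t a b c n = Nat.card (oddReps a b c M) :=
  Nat.card_congr
    { toFun := fun ⟨(x, y, z), h⟩ =>
        ⟨(2 * x + 1, 2 * y + 1, 2 * z + 1),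
          by linear_combination hM + 8 * h + a * eight_mul_tri_add_one x
            + b * eight_mul_tri_add_one y + c * eight_mul_tri_add_one z,
          odd_two_mul_add_one x, odd_two_mul_add_one y, odd_two_mul_add_one z⟩
      invFun := fun ⟨(X, Y, Z), h, hX, hY, hZ⟩ =>
        ⟨(X / 2, Y / 2, Z / 2), by
          have h8 : 8 * (n : ℤ) = 8 * (a * tri (X / 2) + b * tri (Y / 2) + c * tri (Z / 2)) := by
            linear_combination h - hM + a * sq_eq_eight_mul_tri_add_one hX
              + b * sq_eq_eight_mul_tri_add_one hY + c * sq_eq_eight_mul_tri_add_one hZ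
          exact mul_left_cancel₀ (by norm_num) h8⟩
      left_inv := fun ⟨(x, y, z), _⟩ => by ext <;> dsimp only <;> omega
      right_inv := fun ⟨(X, Y, Z), _, hX, hY, hZ⟩ => by
        simp only [Int.odd_iff] at hX hY hZ
        ext <;> dsimp only <;> omega }

theorem Int.sixteen_dvd_add_iff_not_dvd_sub {X Y : ℤ} (hX : Odd X) (hY : Odd Y)
    (h : 32 ∣ X ^ 2 - Y ^ 2) : 16 ∣ X + Y ↔ ¬16 ∣ X - Y := by
  obtain ⟨a, rfl⟩ := hX
  obtain ⟨b, rfl⟩ := hY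
  have h8 : (2 : ℤ) ^ 3 ∣ (a - b) * (a + b + 1) := by
    rw [show (2 * a + 1) ^ 2 - (2 * b + 1) ^ 2 = 4 * ((a - b) * (a + b + 1)) by ring,
      show (32 : ℤ) = 4 * 2 ^ 3 by norm_num] at h
    exact (mul_dvd_mul_iff_left (by norm_num)).mp h
  -- `(a - b) + (a + b + 1)` is odd, so one factor is odd and `8` divides the other
  rcases Int.even_or_odd (a - b) with hab | hab
  · have hodd : Odd (a + b + 1) := by rw [Int.odd_iff]; rw [Int.even_iff] at hab; omega
    have := ((Int.isCoprime_two_left.mpr hodd).pow_left (m := 3)).dvd_of_dvd_mul_right h8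
    rw [Int.odd_iff] at hodd
    omega
  · have := ((Int.isCoprime_two_left.mpr hab).pow_left (m := 3)).dvd_of_dvd_mul_left h8
    rw [Int.odd_iff] at hab
    omega

theorem odd_and_emod_four_of_mem_reps {M : ℤ} (hM : M % 8 = 5) {p : ℤ × ℤ × ℤ}
    (hp : p ∈ reps 1 3 48 M) : Odd p.1 ∧ p.2.1 % 4 = 2 := by
  have := Int.sq_emod_eight p.1
  have := Int.sq_emod_eight p.2.1
  have := Int.sq_emod_eight p.2.2
  rw [mem_reps, one_mul] at hp
  rw [Int.odd_iff]
  omega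

theorem thirtytwo_dvd_sq_sub_sq_of_mem_oddReps {M : ℤ} (hM : M % 8 = 5) {p : ℤ × ℤ × ℤ}
    (hp : p ∈ oddReps 1 3 48 (4 * M)) : 32 ∣ p.1 ^ 2 - p.2.1 ^ 2 := by
  obtain ⟨h, -, hY, hZ⟩ := hp
  rw [one_mul] at h
  have := Int.sq_emod_eight_of_odd hY
  have := Int.sq_emod_eight_of_odd hZ
  omega

def repsEquivOddRepsOneThreeFortyEight {M : ℤ} (hM : M % 8 = 5) :
    reps 1 3 48 M ≃ {q : oddReps 1 3 48 (4 * M) // 16 ∣ q.1.1 - q.1.2.1} where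
  toFun := fun ⟨(u, v, w), h⟩ =>
    ⟨⟨(u + 12 * w, u - 4 * w, v / 2), by
      obtain ⟨hu, hv⟩ : Odd u ∧ v % 4 = 2 := odd_and_emod_four_of_mem_reps hM h
      have hv2 : v = 2 * (v / 2) := by omega
      rw [mem_reps] at h
      rw [Int.odd_iff] at hu
      simp only [mem_oddReps, Int.odd_iff]
      refine ⟨by linear_combination 4 * h + 12 * (v + 2 * (v / 2)) * hv2, ?_, ?_, ?_⟩
        <;> omega⟩, by dsimp only; omega⟩
  invFun := fun ⟨⟨(X, Y, Z), h⟩, hd⟩ =>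
    ⟨((X + 3 * Y) / 4, 2 * Z, (X - Y) / 16), by
      replace h := h.1
      dsimp only at h hd
      have e1 : X + 3 * Y = 4 * ((X + 3 * Y) / 4) := by omega
      have e2 : X - Y = 16 * ((X - Y) / 16) := by omega
      have h16 : 16 * M = 16 * (1 * ((X + 3 * Y) / 4) ^ 2 + 3 * (2 * Z) ^ 2
          + 48 * ((X - Y) / 16) ^ 2) := by
        linear_combination 4 * h + (X + 3 * Y + 4 * ((X + 3 * Y) / 4)) * e1
          + 3 * (X - Y + 16 * ((X - Y) / 16)) * e2
      exact mul_left_cancel₀ (by norm_num) h16⟩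
  left_inv := fun ⟨(u, v, w), h⟩ => by
    have : v % 4 = 2 := (odd_and_emod_four_of_mem_reps hM h).2
    ext <;> dsimp only <;> omega
  right_inv := fun ⟨⟨(X, Y, Z), _⟩, hd⟩ => by
    dsimp only at hd
    ext <;> dsimp only <;> omega

theorem card_oddReps_one_three_forty_eight {M : ℤ} (hM : M % 8 = 5) :
    Nat.card (oddReps 1 3 48 (4 * M)) = 2 * Nat.card (reps 1 3 48 M) := by
  let σ (q : oddReps 1 3 48 (4 * M)) : oddReps 1 3 48 (4 * M) :=
    ⟨(q.1.1, -q.1.2.1, q.1.2.2), by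
      obtain ⟨h, hX, hY, hZ⟩ := q.2
      exact ⟨by rwa [neg_sq], hX, hY.neg, hZ⟩⟩
  have hσ : Function.Involutive σ := fun q => by ext <;> simp [σ]
  rw [Nat.card_eq_two_mul_card_subtype_of_involutive hσ (P := fun q => 16 ∣ q.1.1 - q.1.2.1)
    fun q => by
      simpa [σ] using Int.sixteen_dvd_add_iff_not_dvd_sub q.2.2.1 q.2.2.2.1
        (thirtytwo_dvd_sq_sub_sq_of_mem_oddReps hM q.2)]
  exact congrArg (2 * ·) (Nat.card_congr (repsEquivOddRepsOneThreeFortyEight hM).symm)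

def repsEquivOddRepsOneSixSix {M : ℤ} (hM : M % 8 = 5) :
    reps 1 3 48 M ≃ {q : oddReps 1 6 6 M // 4 ∣ q.1.2.1 - q.1.2.2} where
  toFun := fun ⟨(u, v, w), h⟩ =>
    ⟨⟨(u, v / 2 + 2 * w, v / 2 - 2 * w), by
      obtain ⟨hu, hv⟩ : Odd u ∧ v % 4 = 2 := odd_and_emod_four_of_mem_reps hM h
      have hv2 : v = 2 * (v / 2) := by omega
      rw [mem_reps] at h
      simp only [mem_oddReps, Int.odd_iff]
      refine ⟨by linear_combination h + 3 * (v + 2 * (v / 2)) * hv2, Int.odd_iff.mp hu, ?_, ?_⟩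
        <;> omega⟩, by dsimp only; omega⟩
  invFun := fun ⟨⟨(A, B, C), h⟩, hd⟩ =>
    ⟨(A, B + C, (B - C) / 4), by
      replace h := h.1
      dsimp only at h hd
      have e : B - C = 4 * ((B - C) / 4) := by omega
      rw [mem_reps]
      linear_combination h + 3 * (B - C + 4 * ((B - C) / 4)) * e⟩
  left_inv := fun ⟨(u, v, w), h⟩ => by
    have : v % 4 = 2 := (odd_and_emod_four_of_mem_reps hM h).2
    ext <;> dsimp only <;> omega
  right_inv := fun ⟨⟨(A, B, C), _⟩, hd⟩ => by
    dsimp only at hd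
    ext <;> dsimp only <;> omega

theorem card_oddReps_one_six_six {M : ℤ} (hM : M % 8 = 5) :
    Nat.card (oddReps 1 6 6 M) = 2 * Nat.card (reps 1 3 48 M) := by
  let σ (q : oddReps 1 6 6 M) : oddReps 1 6 6 M :=
    ⟨(q.1.1, q.1.2.1, -q.1.2.2), by
      obtain ⟨h, hA, hB, hC⟩ := q.2
      exact ⟨by rwa [neg_sq], hA, hB, hC.neg⟩⟩
  have hσ : Function.Involutive σ := fun q => by ext <;> simp [σ]
  rw [Nat.card_eq_two_mul_card_subtype_of_involutive hσ (P := fun q => 4 ∣ q.1.2.1 - q.1.2.2)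
    fun q => by
      obtain ⟨-, -, hB, hC⟩ := q.2
      rw [Int.odd_iff] at hB hC
      simp only [σ, sub_neg_eq_add]
      omega]
  exact congrArg (2 * ·) (Nat.card_congr (repsEquivOddRepsOneSixSix hM).symm)

theorem stmt15_general (n : ℕ) (h : n % 4 = 0) :
    t 1 3 48 n = t 1 6 6 (n / 4) ∧ t 1 3 48 n = 2 * N 1 3 48 (2 * n + 13) := by
  have hM : (2 * n + 13 : ℤ) % 8 = 5 := by omega
  have h148 : t 1 3 48 n = 2 * N 1 3 48 (2 * n + 13) := by
    rw [t_eq_card_oddReps 1 3 48 n (M := 4 * (2 * n + 13)) (by push_cast; ring), N_eq_card_reps]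
    push_cast
    exact card_oddReps_one_three_forty_eight hM
  have h166 : t 1 6 6 (n / 4) = 2 * N 1 3 48 (2 * n + 13) := by
    rw [t_eq_card_oddReps 1 6 6 (n / 4) (M := 2 * n + 13) (by push_cast; omega), N_eq_card_reps]
    push_cast
    exact card_oddReps_one_six_six hM
  exact ⟨h148.trans h166.symm, h148⟩

theorem stmt15 (n : ℕ) (hn : 0 < n) (h : n % 4 = 0) :
    t 1 3 48 n = t 1 6 6 (n / 4) ∧ t 1 3 48 n = 2 * N 1 3 48 (2 * n + 13) :=
  stmt15_general n h
end

section
/- For every positive integer n with n ≡ 1 (mod 4), t(1,4,7;n) = 2·N(1,4,7;2n+3). -/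
lemma tri_two (k : ℤ) : 2 * tri k = k * (k + 1) :=
  Int.mul_ediv_cancel' ((Int.even_mul_succ_self k).two_dvd)

lemma sq_tri (k : ℤ) : (2*k+1)^2 = 8 * tri k + 1 := by
  have h := tri_two k
  linear_combination (-4 : ℤ) * h

lemma sqmod16 (u : ℤ) : ∃ j r, u = 16*j + r ∧ 0 ≤ r ∧ r < 16 ∧ ∃ i, u^2 = 32*i + r*r := by
  refine ⟨u/16, u%16, by omega, by omega, by omega, ⟨8*(u/16)^2 + (u/16)*(u%16), ?_⟩⟩
  have h : u = 16*(u/16) + u%16 := by omega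
  linear_combination (u + 16*(u/16) + u%16) * h

lemma sqmod4 (u : ℤ) : ∃ j r, u = 4*j + r ∧ 0 ≤ r ∧ r < 4 ∧ ∃ i, u^2 = 8*i + r*r := by
  refine ⟨u/4, u%4, by omega, by omega, by omega, ⟨2*(u/4)^2 + (u/4)*(u%4), ?_⟩⟩
  have h : u = 4*(u/4) + u%4 := by omega
  linear_combination (u + 4*(u/4) + u%4) * h

lemma parities (m x y z : ℤ) (hm : m % 8 = 5) (hp : m = x^2 + 4*y^2 + 7*z^2) :
    x % 2 = 1 ∧ z % 2 = 0 ∧ (y + z/2) % 2 = 1 := by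
  obtain ⟨j1, r1, e1, b1, b1', i1, q1⟩ := sqmod4 x
  obtain ⟨j2, r2, e2, b2, b2', i2, q2⟩ := sqmod4 y
  obtain ⟨j3, r3, e3, b3, b3', i3, q3⟩ := sqmod4 z
  rw [q1, q2, q3] at hp
  interval_cases r1 <;> interval_cases r2 <;> interval_cases r3 <;> omega

lemma branch (u w i : ℤ) (hu : u % 2 = 1) (hw : w % 2 = 1)
    (h : u^2 + 7*w^2 = 32*i + 16) :
    (16 ∣ 3*u + 7*w) ∨ (16 ∣ 3*u - 7*w) := by
  obtain ⟨j, r, hur, hr0, hr1, i1, hi1⟩ := sqmod16 u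
  obtain ⟨k, s, hws, hs0, hs1, i2, hi2⟩ := sqmod16 w
  rw [hi1, hi2] at h
  interval_cases r <;> interval_cases s <;> omega

lemma fmem (n : ℕ) (h5 : (2*(n:ℤ)+3) % 8 = 5) (x y z : ℤ) (ε : Bool)
    (hp : 2*(n:ℤ)+3 = x^2 + 4*y^2 + 7*z^2) :
    (n:ℤ) = tri ((3*y + 7*(z/2) - 1)/2) + 4 * tri ((x-1)/2) +
      7 * tri (((if ε then y - 3*(z/2) else 3*(z/2) - y) - 1)/2) := by
  obtain ⟨px, pz, pyc⟩ := parities _ x y z h5 hp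
  obtain ⟨c, hzc⟩ : ∃ c, z = 2*c := ⟨z/2, by omega⟩
  subst hzc
  have hcc : (2*c)/2 = c := by omega
  rw [hcc]
  rw [hcc] at pyc
  cases ε
  · simp only [Bool.false_eq_true, if_false]
    have e1 : 2*((3*y+7*c-1)/2)+1 = 3*y+7*c := by omega
    have e2 : 2*((x-1)/2)+1 = x := by omega
    have e3 : 2*((3*c-y-1)/2)+1 = 3*c-y := by omega
    have q1 := sq_tri ((3*y+7*c-1)/2); rw [e1] at q1
    have q2 := sq_tri ((x-1)/2); rw [e2] at q2
    have q3 := sq_tri ((3*c-y-1)/2); rw [e3] at q3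
    have hq : (3*y+7*c)^2 + 4*x^2 + 7*(3*c-y)^2 = 8*(n:ℤ)+12 := by
      linear_combination (-4 : ℤ)*hp
    linarith
  · simp only [if_true]
    have e1 : 2*((3*y+7*c-1)/2)+1 = 3*y+7*c := by omega
    have e2 : 2*((x-1)/2)+1 = x := by omega
    have e3 : 2*((y-3*c-1)/2)+1 = y-3*c := by omega
    have q1 := sq_tri ((3*y+7*c-1)/2); rw [e1] at q1
    have q2 := sq_tri ((x-1)/2); rw [e2] at q2
    have q3 := sq_tri ((y-3*c-1)/2); rw [e3] at q3
    have hq : (3*y+7*c)^2 + 4*x^2 + 7*(y-3*c)^2 = 8*(n:ℤ)+12 := by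
      linear_combination (-4 : ℤ)*hp
    linarith

def fmap (n : ℕ) (h5 : (2*(n:ℤ)+3) % 8 = 5)
    (q : {p : ℤ × ℤ × ℤ // 2*(n:ℤ)+3 = p.1^2 + 4*p.2.1^2 + 7*p.2.2^2} × Bool) :
    {p : ℤ × ℤ × ℤ // (n:ℤ) = tri p.1 + 4*tri p.2.1 + 7*tri p.2.2} :=
  ⟨((3*q.1.1.2.1 + 7*(q.1.1.2.2/2) - 1)/2, (q.1.1.1 - 1)/2,
      ((if q.2 then q.1.1.2.1 - 3*(q.1.1.2.2/2) else 3*(q.1.1.2.2/2) - q.1.1.2.1) - 1)/2),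
    fmem n h5 q.1.1.1 q.1.1.2.1 q.1.1.2.2 q.2 q.1.2⟩

lemma fmap_inj (n : ℕ) (h5 : (2*(n:ℤ)+3) % 8 = 5) :
    Function.Injective (fmap n h5) := by
  rintro ⟨⟨⟨x, y, z⟩, hp⟩, ε⟩ ⟨⟨⟨x', y', z'⟩, hp'⟩, ε'⟩ heq
  obtain ⟨px, pz, pyc⟩ := parities _ x y z h5 hp
  obtain ⟨px', pz', pyc'⟩ := parities _ x' y' z' h5 hp'
  simp only [fmap, Subtype.mk.injEq, Prod.mk.injEq] at heq
  obtain ⟨h1, h2, h3⟩ := heq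
  simp only [Prod.mk.injEq, Subtype.mk.injEq]
  cases ε <;> cases ε' <;> simp only [Bool.false_eq_true, if_false, if_true] at h3 ⊢
  · exact ⟨⟨by omega, by omega, by omega⟩, trivial⟩
  · exfalso; omega
  · exfalso; omega
  · exact ⟨⟨by omega, by omega, by omega⟩, trivial⟩

lemma fmap_surj (n : ℕ) (h5 : (2*(n:ℤ)+3) % 8 = 5) (k : ℤ) (hkz : (n:ℤ) = 4*k+1) :
    Function.Surjective (fmap n h5) := by
  rintro ⟨⟨X, Y, Z⟩, ha⟩
  have q1 := sq_tri X
  have q2 := sq_tri Y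
  have q3 := sq_tri Z
  have ha' : (n:ℤ) = tri X + 4 * tri Y + 7 * tri Z := ha
  have hq : (2*X+1)^2 + 4*(2*Y+1)^2 + 7*(2*Z+1)^2 = 8*(n:ℤ)+12 := by linarith
  have hi : (2*X+1)^2 + 7*(2*Z+1)^2 = 32*(k - tri Y) + 16 := by linarith
  rcases branch (2*X+1) (2*Z+1) _ (by omega) (by omega) hi with hb | hb
  · obtain ⟨y0, hy0⟩ := hb
    have hcd : (16:ℤ) ∣ (2*X+1) - 3*(2*Z+1) := by omega
    obtain ⟨c0, hc0⟩ := hcd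
    have hu : 2*X+1 = 3*y0 + 7*c0 := by omega
    have hw : 2*Z+1 = y0 - 3*c0 := by omega
    have hmem : 2*(n:ℤ)+3 = (2*Y+1)^2 + 4*y0^2 + 7*(2*c0)^2 := by
      have h4 : 4*(2*(n:ℤ)+3) = 4*((2*Y+1)^2 + 4*y0^2 + 7*(2*c0)^2) := by
        linear_combination (-1 : ℤ)*hq + (2*X+1+3*y0+7*c0)*hu + 7*(2*Z+1+y0-3*c0)*hw
      linarith
    refine ⟨⟨⟨(2*Y+1, y0, 2*c0), hmem⟩, true⟩, ?_⟩
    apply Subtype.ext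
    simp only [fmap, if_true, Prod.mk.injEq]
    refine ⟨by omega, by omega, by omega⟩
  · obtain ⟨y0, hy0⟩ := hb
    have hcd : (16:ℤ) ∣ (2*X+1) + 3*(2*Z+1) := by omega
    obtain ⟨c0, hc0⟩ := hcd
    have hu : 2*X+1 = 3*y0 + 7*c0 := by omega
    have hw : 2*Z+1 = 3*c0 - y0 := by omega
    have hmem : 2*(n:ℤ)+3 = (2*Y+1)^2 + 4*y0^2 + 7*(2*c0)^2 := by
      have h4 : 4*(2*(n:ℤ)+3) = 4*((2*Y+1)^2 + 4*y0^2 + 7*(2*c0)^2) := by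
        linear_combination (-1 : ℤ)*hq + (2*X+1+3*y0+7*c0)*hu + 7*(2*Z+1+3*c0-y0)*hw
      linarith
    refine ⟨⟨⟨(2*Y+1, y0, 2*c0), hmem⟩, false⟩, ?_⟩
    apply Subtype.ext
    simp only [fmap, Bool.false_eq_true, if_false, Prod.mk.injEq]
    refine ⟨by omega, by omega, by omega⟩

theorem stmt17 (n : ℕ) (hn : 0 < n) (h : n % 4 = 1) :
    t 1 4 7 n = 2 * N 1 4 7 (2 * n + 3) := by
  obtain ⟨k, hk⟩ : ∃ k : ℕ, n = 4*k+1 := ⟨n/4, by omega⟩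
  have hkz : (n : ℤ) = 4*(k:ℤ)+1 := by rw [hk]; push_cast; ring
  have h5 : (2*(n:ℤ)+3) % 8 = 5 := by omega
  have hE : Nat.card ({p : ℤ × ℤ × ℤ // 2*(n:ℤ)+3 = p.1^2 + 4*p.2.1^2 + 7*p.2.2^2} × Bool)
      = Nat.card {p : ℤ × ℤ × ℤ // (n:ℤ) = tri p.1 + 4*tri p.2.1 + 7*tri p.2.2} :=
    Nat.card_congr (Equiv.ofBijective (fmap n h5) ⟨fmap_inj n h5, fmap_surj n h5 k hkz⟩)
  have hA : t 1 4 7 n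
      = Nat.card {p : ℤ × ℤ × ℤ // (n:ℤ) = tri p.1 + 4*tri p.2.1 + 7*tri p.2.2} :=
    Nat.card_congr (Equiv.subtypeEquivRight (by
      intro p
      push_cast
      constructor <;> intro hh <;> linarith))
  have hB : N 1 4 7 (2*n+3)
      = Nat.card {p : ℤ × ℤ × ℤ // 2*(n:ℤ)+3 = p.1^2 + 4*p.2.1^2 + 7*p.2.2^2} :=
    Nat.card_congr (Equiv.subtypeEquivRight (by
      intro p
      push_cast
      constructor <;> intro hh <;> linarith))
  rw [hA, hB, ← hE, Nat.card_prod]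
  simp [Nat.card_eq_fintype_card, mul_comm]
end
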